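/- Let F be a field of characteristic 2 and ν, η, ω three 3-cocycles on the 5-simplex with vertex set {0,…,5}, with ω(ijkl) ≠ 0 for every 4-element subset. For each i ∈ {0,…,5}, let Q_i(ν,η) be the value Q computed on the 5-element vertex set {0,…,5}∖{i}, and define c(ν,η) = Σ_{0≤i<i'≤5} Q_i(ν,η)·Q_{i'}(ν,η) + Σ_{i even} (Q_i(ν,η))². Then for all a, b ∈ F, c(ν + a·ω, η + b·ω) = c(ν, η); that is, c depends only on the classes of ν and η modulo multiples of ω. -/
import Mathlib


/-- A 3-cochain on vertex set `Fin 6` assigns a value to each (increasing)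
4-tuple of vertices.  For `i : Fin 6`, the 5-element vertex set
`{0,…,5} ∖ {i}` has increasing list `m ↦ i.succAbove m` (`m : Fin 5`);
`heptagonQi F ν η ω i` is the value
`Q(ν,η) = ∑ k, (−1)^k ν(t_k)·η(t_k)/ω(t_k)` computed on it, `t_k` being its
increasing 4-tuple omitting the `k`-th element. -/
lemma heptagonKey (F : Type*) [Field F] (a b : F)
    (ν0 ν1 ν2 ν3 ν4 η0 η1 η2 η3 η4 ω0 ω1 ω2 ω3 ω4 : F)
    (h0 : ω0 ≠ 0) (h1 : ω1 ≠ 0) (h2 : ω2 ≠ 0) (h3 : ω3 ≠ 0) (h4 : ω4 ≠ 0)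
    (hν : ν0 - ν1 + ν2 - ν3 + ν4 = 0)
    (hη : η0 - η1 + η2 - η3 + η4 = 0)
    (hω : ω0 - ω1 + ω2 - ω3 + ω4 = 0) :
    (ν0 + a*ω0)*(η0 + b*ω0)/ω0 - (ν1 + a*ω1)*(η1 + b*ω1)/ω1
      + (ν2 + a*ω2)*(η2 + b*ω2)/ω2 - (ν3 + a*ω3)*(η3 + b*ω3)/ω3
      + (ν4 + a*ω4)*(η4 + b*ω4)/ω4
    = ν0*η0/ω0 - ν1*η1/ω1 + ν2*η2/ω2 - ν3*η3/ω3 + ν4*η4/ω4 := by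
  have expand : ∀ (x y w : F), w ≠ 0 →
      (x + a*w)*(y + b*w)/w = x*y/w + a*y + b*x + a*b*w := by
    intro x y w hw; field_simp; ring
  rw [expand _ _ _ h0, expand _ _ _ h1, expand _ _ _ h2, expand _ _ _ h3,
    expand _ _ _ h4]
  linear_combination a * hη + b * hν + a*b*hω

def heptagonQi (F : Type*) [Field F]
    (ν η ω : Fin 6 → Fin 6 → Fin 6 → Fin 6 → F) (i : Fin 6) : F :=
  ∑ k : Fin 5,
    (-1 : F) ^ (k : ℕ) *
      (ν (i.succAbove (k.succAbove 0)) (i.succAbove (k.succAbove 1))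
          (i.succAbove (k.succAbove 2)) (i.succAbove (k.succAbove 3)) *
        η (i.succAbove (k.succAbove 0)) (i.succAbove (k.succAbove 1))
          (i.succAbove (k.succAbove 2)) (i.succAbove (k.succAbove 3)) /
        ω (i.succAbove (k.succAbove 0)) (i.succAbove (k.succAbove 1))
          (i.succAbove (k.succAbove 2)) (i.succAbove (k.succAbove 3)))

/-- The 5-cochain value
`c(ν,η) = ∑_{i<i'} Q_i(ν,η)·Q_{i'}(ν,η) + ∑_{i even} Q_i(ν,η)²` on the
5-simplex `{0,…,5}`. -/
def heptagonC (F : Type*) [Field F]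
    (ν η ω : Fin 6 → Fin 6 → Fin 6 → Fin 6 → F) : F :=
  (∑ q ∈ Finset.univ.filter (fun q : Fin 6 × Fin 6 => q.1 < q.2),
      heptagonQi F ν η ω q.1 * heptagonQi F ν η ω q.2) +
    ∑ i ∈ Finset.univ.filter (fun i : Fin 6 => Even (i : ℕ)),
      (heptagonQi F ν η ω i) ^ 2

lemma heptagonQi_add (F : Type*) [Field F]
    (ν η ω : Fin 6 → Fin 6 → Fin 6 → Fin 6 → F)
    (hν : ∀ i j k l m : Fin 6, i < j → j < k → k < l → l < m →
      ν j k l m - ν i k l m + ν i j l m - ν i j k m + ν i j k l = 0)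
    (hη : ∀ i j k l m : Fin 6, i < j → j < k → k < l → l < m →
      η j k l m - η i k l m + η i j l m - η i j k m + η i j k l = 0)
    (hω : ∀ i j k l m : Fin 6, i < j → j < k → k < l → l < m →
      ω j k l m - ω i k l m + ω i j l m - ω i j k m + ω i j k l = 0)
    (hnz : ∀ i j k l : Fin 6, i < j → j < k → k < l → ω i j k l ≠ 0)
    (a b : F) (i : Fin 6) :
    heptagonQi F (fun p q r s => ν p q r s + a * ω p q r s)
      (fun p q r s => η p q r s + b * ω p q r s) ω i =
      heptagonQi F ν η ω i := by
  have sm := Fin.strictMono_succAbove i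
  have h01 : i.succAbove 0 < i.succAbove 1 := sm (by decide)
  have h12 : i.succAbove 1 < i.succAbove 2 := sm (by decide)
  have h23 : i.succAbove 2 < i.succAbove 3 := sm (by decide)
  have h34 : i.succAbove 3 < i.succAbove 4 := sm (by decide)
  simp only [heptagonQi, Fin.sum_univ_five,
    show ((0:Fin 5).succAbove 0) = 1 from rfl,
    show ((0:Fin 5).succAbove 1) = 2 from rfl,
    show ((0:Fin 5).succAbove 2) = 3 from rfl,
    show ((0:Fin 5).succAbove 3) = 4 from rfl,
    show ((1:Fin 5).succAbove 0) = 0 from rfl,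
    show ((1:Fin 5).succAbove 1) = 2 from rfl,
    show ((1:Fin 5).succAbove 2) = 3 from rfl,
    show ((1:Fin 5).succAbove 3) = 4 from rfl,
    show ((2:Fin 5).succAbove 0) = 0 from rfl,
    show ((2:Fin 5).succAbove 1) = 1 from rfl,
    show ((2:Fin 5).succAbove 2) = 3 from rfl,
    show ((2:Fin 5).succAbove 3) = 4 from rfl,
    show ((3:Fin 5).succAbove 0) = 0 from rfl,
    show ((3:Fin 5).succAbove 1) = 1 from rfl,
    show ((3:Fin 5).succAbove 2) = 2 from rfl,
    show ((3:Fin 5).succAbove 3) = 4 from rfl,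
    show ((4:Fin 5).succAbove 0) = 0 from rfl,
    show ((4:Fin 5).succAbove 1) = 1 from rfl,
    show ((4:Fin 5).succAbove 2) = 2 from rfl,
    show ((4:Fin 5).succAbove 3) = 3 from rfl,
    Fin.val_zero, Fin.val_one, pow_zero, pow_one,
    show ((2:Fin 5):ℕ) = 2 from rfl, show ((3:Fin 5):ℕ) = 3 from rfl,
    show ((4:Fin 5):ℕ) = 4 from rfl]
  ring_nf
  have key := heptagonKey F a b
    (ν (i.succAbove 1) (i.succAbove 2) (i.succAbove 3) (i.succAbove 4))
    (ν (i.succAbove 0) (i.succAbove 2) (i.succAbove 3) (i.succAbove 4))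
    (ν (i.succAbove 0) (i.succAbove 1) (i.succAbove 3) (i.succAbove 4))
    (ν (i.succAbove 0) (i.succAbove 1) (i.succAbove 2) (i.succAbove 4))
    (ν (i.succAbove 0) (i.succAbove 1) (i.succAbove 2) (i.succAbove 3))
    (η (i.succAbove 1) (i.succAbove 2) (i.succAbove 3) (i.succAbove 4))
    (η (i.succAbove 0) (i.succAbove 2) (i.succAbove 3) (i.succAbove 4))
    (η (i.succAbove 0) (i.succAbove 1) (i.succAbove 3) (i.succAbove 4))
    (η (i.succAbove 0) (i.succAbove 1) (i.succAbove 2) (i.succAbove 4))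
    (η (i.succAbove 0) (i.succAbove 1) (i.succAbove 2) (i.succAbove 3))
    (ω (i.succAbove 1) (i.succAbove 2) (i.succAbove 3) (i.succAbove 4))
    (ω (i.succAbove 0) (i.succAbove 2) (i.succAbove 3) (i.succAbove 4))
    (ω (i.succAbove 0) (i.succAbove 1) (i.succAbove 3) (i.succAbove 4))
    (ω (i.succAbove 0) (i.succAbove 1) (i.succAbove 2) (i.succAbove 4))
    (ω (i.succAbove 0) (i.succAbove 1) (i.succAbove 2) (i.succAbove 3))
    (hnz _ _ _ _ h12 h23 h34)
    (hnz _ _ _ _ (h01.trans h12) h23 h34)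
    (hnz _ _ _ _ h01 (h12.trans h23) h34)
    (hnz _ _ _ _ h01 h12 (h23.trans h34))
    (hnz _ _ _ _ h01 h12 h23)
    (hν _ _ _ _ _ h01 h12 h23 h34)
    (hη _ _ _ _ _ h01 h12 h23 h34)
    (hω _ _ _ _ _ h01 h12 h23 h34)
  linear_combination key

/-- in characteristic 2, for 3-cocycles `ν`, `η`, `ω` on the
5-simplex `{0,…,5}` with `ω` nowhere vanishing,
`c(ν + a·ω, η + b·ω) = c(ν, η)`: the 5-cochain value `c` depends only on the
classes of `ν` and `η` modulo multiples of `ω`. -/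
theorem heptagonC_mod_omega
    (F : Type*) [Field F] [CharP F 2]
    (ν η ω : Fin 6 → Fin 6 → Fin 6 → Fin 6 → F)
    (hν : ∀ i j k l m : Fin 6, i < j → j < k → k < l → l < m →
      ν j k l m - ν i k l m + ν i j l m - ν i j k m + ν i j k l = 0)
    (hη : ∀ i j k l m : Fin 6, i < j → j < k → k < l → l < m →
      η j k l m - η i k l m + η i j l m - η i j k m + η i j k l = 0)
    (hω : ∀ i j k l m : Fin 6, i < j → j < k → k < l → l < m →
      ω j k l m - ω i k l m + ω i j l m - ω i j k m + ω i j k l = 0)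
    (hnz : ∀ i j k l : Fin 6, i < j → j < k → k < l → ω i j k l ≠ 0)
    (a b : F) :
    heptagonC F (fun p q r s => ν p q r s + a * ω p q r s)
      (fun p q r s => η p q r s + b * ω p q r s) ω =
      heptagonC F ν η ω := by
  simp only [heptagonC, heptagonQi_add F ν η ω hν hη hω hnz a b]
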